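/- arXiv:0911.0085 — 2 statements merged into one kernel-verified Lean document; each statement's English description precedes it below -/
import Mathlib

section
/- Let p be a prime, S a finite p-group, and X a finite bifree (S,S)-biset with |X|/|S| prime to p, such that Pre-Fix(X) is level-wise closed. Let P ≤ S and assume |X^{(P,φ)}| = |X^{(P,ψ)}| for all φ, ψ ∈ Hom_{Pre-Fix(X)}(P,S). Then Pre-Fix(X) is saturated at P. -/
/-! ## Bisets -/

/-- A `(G,H)`-biset structure on a type `X`: a left `H`-action and a right `G`-action
that commute with each other. -/
structure BisetAction (G H : Type*) [Group G] [Group H] (X : Type*) where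
  /-- the left `H`-action -/
  smul : H → X → X
  /-- the right `G`-action -/
  rmul : X → G → X
  one_smul : ∀ x, smul 1 x = x
  mul_smul : ∀ h₁ h₂ x, smul (h₁ * h₂) x = smul h₁ (smul h₂ x)
  rmul_one : ∀ x, rmul x 1 = x
  rmul_mul : ∀ x g₁ g₂, rmul x (g₁ * g₂) = rmul (rmul x g₁) g₂
  smul_rmul : ∀ h x g, rmul (smul h x) g = smul h (rmul x g)

namespace BisetAction

variable {G H K : Type*} [Group G] [Group H] [Group K] {X Y Z : Type*}

lemma smul_smul (A : BisetAction G H X) (h₁ h₂ : H) (x : X) :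
    A.smul h₁ (A.smul h₂ x) = A.smul (h₁ * h₂) x := (A.mul_smul h₁ h₂ x).symm

lemma rmul_rmul (A : BisetAction G H X) (x : X) (g₁ g₂ : G) :
    A.rmul (A.rmul x g₁) g₂ = A.rmul x (g₁ * g₂) := (A.rmul_mul x g₁ g₂).symm

/-- The biset is left-free. -/
def LeftFree (A : BisetAction G H X) : Prop := ∀ (h : H) (x : X), A.smul h x = x → h = 1

/-- The biset is right-free. -/
def RightFree (A : BisetAction G H X) : Prop := ∀ (g : G) (x : X), A.rmul x g = x → g = 1

/-- The biset is bifree: both actions are free. -/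
def Bifree (A : BisetAction G H X) : Prop := A.LeftFree ∧ A.RightFree

/-- The fixed-point set `X^{(P,φ)} = {x | x·u = φ(u)·x for all u ∈ P}`. -/
def Fix (A : BisetAction G H X) (P : Subgroup G) (φ : P →* H) : Set X :=
  {x | ∀ u : P, A.rmul x u = A.smul (φ u) x}

/-- The opposite biset: same underlying set, with the two actions reversed
(`g·x·h` in `op A` is `h⁻¹·x·g⁻¹` in `A`). -/
def op (A : BisetAction G H X) : BisetAction H G X where
  smul g x := A.rmul x g⁻¹
  rmul x h := A.smul h⁻¹ x
  one_smul x := by simpa using A.rmul_one x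
  mul_smul g₁ g₂ x := by rw [mul_inv_rev, A.rmul_mul]
  rmul_one x := by simpa using A.one_smul x
  rmul_mul x h₁ h₂ := by rw [mul_inv_rev, A.mul_smul]
  smul_rmul g x h := (A.smul_rmul h⁻¹ x g⁻¹).symm

/-- The setoid of left `H`-orbits. -/
def leftOrbitSetoid (A : BisetAction G H X) : Setoid X where
  r x y := ∃ h : H, y = A.smul h x
  iseqv := by
    refine ⟨fun x => ⟨1, (A.one_smul x).symm⟩, ?_, ?_⟩
    · rintro x y ⟨h, rfl⟩
      exact ⟨h⁻¹, by rw [A.smul_smul, inv_mul_cancel, A.one_smul]⟩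
    · rintro x y z ⟨h₁, rfl⟩ ⟨h₂, rfl⟩
      exact ⟨h₂ * h₁, A.smul_smul h₂ h₁ x⟩

/-- The set of left `H`-orbits of the biset. -/
def leftOrbits (A : BisetAction G H X) : Type _ := Quotient (A.leftOrbitSetoid)

/-- Restricting the right action along a homomorphism `φ : P →* G`. -/
def restrictRight (A : BisetAction G H X) {P : Type*} [Group P] (φ : P →* G) :
    BisetAction P H X where
  smul := A.smul
  rmul x u := A.rmul x (φ u)
  one_smul := A.one_smul
  mul_smul := A.mul_smul
  rmul_one x := by rw [map_one, A.rmul_one]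
  rmul_mul x u₁ u₂ := by rw [map_mul, A.rmul_mul]
  smul_rmul h x u := A.smul_rmul h x (φ u)

/-- Restricting the left action along a homomorphism `φ : P →* H`. -/
def restrictLeft (A : BisetAction G H X) {P : Type*} [Group P] (φ : P →* H) :
    BisetAction G P X where
  smul u x := A.smul (φ u) x
  rmul := A.rmul
  one_smul x := by rw [map_one, A.one_smul]
  mul_smul u₁ u₂ x := by rw [map_mul, A.mul_smul]
  rmul_one := A.rmul_one
  rmul_mul := A.rmul_mul
  smul_rmul u x g := A.smul_rmul (φ u) x g

end BisetAction

/-- An isomorphism of `(G,H)`-bisets: an equivalence of underlying sets commuting with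
both actions. -/
structure BisetIso {G H : Type*} [Group G] [Group H] {X Y : Type*}
    (A : BisetAction G H X) (B : BisetAction G H Y) extends X ≃ Y where
  map_smul : ∀ (h : H) (x : X), toEquiv (A.smul h x) = B.smul h (toEquiv x)
  map_rmul : ∀ (x : X) (g : G), toEquiv (A.rmul x g) = B.rmul (toEquiv x) g

/-! ## Collections of morphisms between subgroups -/

section Collections

variable {S : Type*} [Group S]

/-- The conjugation homomorphism `P →* S`, `u ↦ s * u * s⁻¹`. -/
def conjHom (s : S) (P : Subgroup S) : P →* S :=
  (MulAut.conj s).toMonoidHom.comp P.subtype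

/-- A "collection" of morphism sets on the poset of subgroups of `S`:
for each pair of subgroups `P Q ≤ S` a set of group homomorphisms `P →* S`
(to be thought of as morphisms from `P` to `Q`, i.e. maps landing in `Q`). -/
abbrev Collection (S : Type*) [Group S] :=
  ∀ (P : Subgroup S), Subgroup S → Set (P →* S)

namespace Collection

/-- `P` and `Q` are conjugate in the collection `C` if some morphism of `C`
restricts to an isomorphism from `P` onto `Q`. -/
def IsConj (C : Collection S) (P Q : Subgroup S) : Prop :=
  ∃ φ ∈ C P Q, MonoidHom.range φ = Q

/-- `P` is fully centralized: its centralizer has maximal order in its conjugacy class. -/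
def FullyCentralized (C : Collection S) (P : Subgroup S) : Prop :=
  ∀ Q : Subgroup S, C.IsConj P Q →
    Nat.card (Subgroup.centralizer (Q : Set S)) ≤ Nat.card (Subgroup.centralizer (P : Set S))

/-- `P` is fully normalized: its normalizer has maximal order in its conjugacy class. -/
def FullyNormalized (C : Collection S) (P : Subgroup S) : Prop :=
  ∀ Q : Subgroup S, C.IsConj P Q → Nat.card (Subgroup.normalizer (Q : Set S)) ≤ Nat.card (Subgroup.normalizer (P : Set S))

end Collection

/-- The set `Aut_S(P)` of automorphisms of `P` induced by conjugation by elements of the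
normalizer `N_S(P)`, as a set of homomorphisms `P →* S`. -/
def autSSet (P : Subgroup S) : Set (P →* S) :=
  {φ | ∃ s ∈ Subgroup.normalizer (P : Set S), φ = conjHom s P}

/-- `Aut_S(P)` is a Sylow `p`-subgroup of `Aut_C(P) = C P P`:  `Aut_S(P)` is contained
in `Aut_C(P)`, has `p`-power order, and has index prime to `p` in `Aut_C(P)`. -/
def Collection.AutSIsSylow (p : ℕ) (C : Collection S) (P : Subgroup S) : Prop :=
  autSSet P ⊆ C P P ∧ (∃ n : ℕ, Nat.card (autSSet P) = p ^ n) ∧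
    ∃ k : ℕ, ¬ p ∣ k ∧ Nat.card (C P P) = k * Nat.card (autSSet P)

/-- A collection is level-wise closed if it contains all conjugation maps induced by `S`,
the inverse of every isomorphism it contains, and all composites of composable
isomorphisms it contains. -/
def LevelwiseClosed (C : Collection S) : Prop :=
  (∀ (P Q : Subgroup S) (s : S), (∀ u ∈ P, s * u * s⁻¹ ∈ Q) → conjHom s P ∈ C P Q) ∧
  (∀ (P Q : Subgroup S), ∀ φ ∈ C P Q, MonoidHom.range φ = Q → ∀ ψ : Q →* S,
    (∀ (u : P) (hq : (φ u : S) ∈ Q), ψ ⟨φ u, hq⟩ = u) → ψ ∈ C Q P) ∧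
  (∀ (P Q R : Subgroup S) (φ : P →* S), φ ∈ C P Q → ∀ ψ : Q →* S, ψ ∈ C Q R →
    ∀ hφ : MonoidHom.range φ = Q, MonoidHom.range ψ = R →
    ψ.comp (φ.codRestrict Q (fun u => hφ ▸ show φ u ∈ φ.range from ⟨u, rfl⟩)) ∈ C P R)

end Collections

/-! ## Fusion systems -/

section Fusion

variable {S : Type*} [Group S]

/-- A fusion system on a group `S`: for each pair of subgroups `P, Q ≤ S`, a set
`Hom P Q` of injective homomorphisms `P → Q` (represented as homomorphisms `P →* S`
with image contained in `Q`), containing all conjugation maps induced by `S`, closed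
under composition, and such that every morphism restricts to an isomorphism onto its
image lying in the fusion system, whose inverse also lies in the fusion system. -/
structure FusionSystem (S : Type*) [Group S] where
  Hom : Collection S
  injective' : ∀ {P Q : Subgroup S} {φ : P →* S}, φ ∈ Hom P Q → Function.Injective φ
  mapsTo' : ∀ {P Q : Subgroup S} {φ : P →* S}, φ ∈ Hom P Q → ∀ u : P, φ u ∈ Q
  conj_mem' : ∀ (P Q : Subgroup S) (s : S), (∀ u ∈ P, s * u * s⁻¹ ∈ Q) →
    conjHom s P ∈ Hom P Q
  comp_mem' : ∀ {P Q R : Subgroup S} {φ : P →* S} {ψ : Q →* S},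
    (hφ : φ ∈ Hom P Q) → (hψ : ψ ∈ Hom Q R) →
    ψ.comp (φ.codRestrict Q (mapsTo' hφ)) ∈ Hom P R
  target_mem' : ∀ {P Q : Subgroup S} {φ : P →* S}, φ ∈ Hom P Q → φ ∈ Hom P φ.range
  inv_mem' : ∀ {P Q : Subgroup S} {φ : P →* S}, φ ∈ Hom P Q →
    ∃ ψ ∈ Hom φ.range P, ∀ u : P, ψ ⟨φ u, ⟨u, rfl⟩⟩ = u

/-- The subgroup `N_φ = {x ∈ N_S(P) | ∃ y ∈ N_S(φ(P)), ∀ u ∈ P, φ(xux⁻¹) = yφ(u)y⁻¹}`. -/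
def Nphi (P : Subgroup S) (φ : P →* S) : Subgroup S where
  carrier := {x | x ∈ Subgroup.normalizer (P : Set S) ∧ ∃ y ∈ Subgroup.normalizer (φ.range : Set S),
    ∀ (u v : S) (hu : u ∈ P) (hv : v ∈ P), v = x * u * x⁻¹ →
      φ ⟨v, hv⟩ = y * φ ⟨u, hu⟩ * y⁻¹}
  one_mem' := by
    refine ⟨(Subgroup.normalizer (P : Set S)).one_mem, 1, (Subgroup.normalizer (φ.range : Set S)).one_mem, ?_⟩
    intro u v hu hv hveq
    have h1 : (⟨v, hv⟩ : P) = ⟨u, hu⟩ := Subtype.ext (show v = u by rw [hveq]; group)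
    rw [h1]; group
  mul_mem' := by
    rintro x₁ x₂ ⟨hx₁, y₁, hy₁, h₁⟩ ⟨hx₂, y₂, hy₂, h₂⟩
    refine ⟨mul_mem hx₁ hx₂, y₁ * y₂, mul_mem hy₁ hy₂, ?_⟩
    intro u v hu hv hveq
    have hw : x₂ * u * x₂⁻¹ ∈ P := (Subgroup.mem_normalizer_iff.mp hx₂ u).mp hu
    have e1 : φ ⟨v, hv⟩ = y₁ * φ ⟨x₂ * u * x₂⁻¹, hw⟩ * y₁⁻¹ :=
      h₁ _ _ hw hv (by rw [hveq]; group)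
    have e2 : φ ⟨x₂ * u * x₂⁻¹, hw⟩ = y₂ * φ ⟨u, hu⟩ * y₂⁻¹ := h₂ _ _ hu hw rfl
    rw [e1, e2]; group
  inv_mem' := by
    rintro x ⟨hx, y, hy, h⟩
    refine ⟨Subgroup.inv_mem _ hx, y⁻¹, Subgroup.inv_mem _ hy, ?_⟩
    intro u v hu hv hveq
    have e1 : φ ⟨u, hu⟩ = y * φ ⟨v, hv⟩ * y⁻¹ :=
      h _ _ hv hu (by rw [hveq]; group)
    rw [e1]; group

namespace FusionSystem

/-- Axiom I of saturation: every fully normalized subgroup is fully centralized and its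
`S`-automorphism group is a Sylow `p`-subgroup of its full automorphism group. -/
def AxiomI (p : ℕ) (F : FusionSystem S) : Prop :=
  ∀ P : Subgroup S, F.Hom.FullyNormalized P →
    F.Hom.FullyCentralized P ∧ F.Hom.AutSIsSylow p P

/-- Axiom I restricted to the full subgroup `S` itself:
`Aut_S(S)` is a Sylow `p`-subgroup of `Aut_F(S)`. -/
def AxiomIS (p : ℕ) (F : FusionSystem S) : Prop :=
  F.Hom.AutSIsSylow p ⊤

/-- Axiom II of saturation (the extension axiom): every morphism `φ : P → S` of `F`
whose image is fully centralized extends to a morphism of `F` defined on `N_φ`. -/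
def AxiomII (F : FusionSystem S) : Prop :=
  ∀ (P : Subgroup S) (φ : P →* S), φ ∈ F.Hom P ⊤ →
    F.Hom.FullyCentralized φ.range →
    ∃ φbar ∈ F.Hom (Nphi P φ) ⊤,
      ∀ (u : S) (hu : u ∈ P) (hu' : u ∈ Nphi P φ), φbar ⟨u, hu'⟩ = φ ⟨u, hu⟩

/-- A fusion system is saturated if it satisfies Axioms I and II. -/
def Saturated (p : ℕ) (F : FusionSystem S) : Prop :=
  F.AxiomI p ∧ F.AxiomII

end FusionSystem

/-- The closure of a collection: the smallest fusion system containing it.  (The morphism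
sets of the closure are the intersections of the morphism sets over all fusion systems
containing the collection.) -/
def closureHom (C : Collection S) : Collection S :=
  fun P Q =>
    {φ | ∀ F : FusionSystem S, (∀ P' Q', C P' Q' ⊆ F.Hom P' Q') → φ ∈ F.Hom P Q}

/-- A level-wise closed collection `C` is saturated at `P ≤ S` if:
(I_P) every fully normalized `Q` conjugate to `P` in `C` is fully centralized and
`Aut_S(Q)` is a Sylow `p`-subgroup of `Aut_C(Q)`; and
(II_P) every `φ ∈ Hom_C(P,S)` with fully centralized image extends to a morphism
`N_φ → S` in the closure of `C`. -/
def SaturatedAt (p : ℕ) (C : Collection S) (P : Subgroup S) : Prop :=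
  (∀ Q : Subgroup S, C.IsConj P Q → C.FullyNormalized Q →
    C.FullyCentralized Q ∧ C.AutSIsSylow p Q) ∧
  (∀ φ ∈ C P ⊤, C.FullyCentralized (MonoidHom.range φ) →
    ∃ φbar ∈ closureHom C (Nphi P φ) ⊤,
      ∀ (u : S) (hu : u ∈ P) (hu' : u ∈ Nphi P φ), φbar ⟨u, hu'⟩ = φ ⟨u, hu⟩)

end Fusion

/-- The pre-fusion collection `Pre-Fix(X)`: morphisms from `P` to `Q` are the injective
homomorphisms `φ : P → Q` with nonempty fixed-point set `X^{(P,φ)}`. -/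
def preFixHom {S X : Type*} [Group S] (A : BisetAction S S X) : Collection S :=
  fun P Q => {φ | Function.Injective φ ∧ (∀ u : P, φ u ∈ Q) ∧ (A.Fix P φ).Nonempty}

/-!
Let `L` be the set of left `S`-orbits of `X`. Bifreeness gives `|X| = |S| · |L|`, so `p ∤ |L|`,
and an orbit is fixed by the right action of `P` exactly when it contains a point of some
`X^{(P,φ)}`. Sorting the `P`-fixed orbits by the `S`-class of `φ(P)` and counting modulo `p`
yields a subgroup `R`, conjugate to `P` in `Pre-Fix(X)`, such that the number `t_R` of orbits
containing a point of some `X^{(P,φ)}` with `φ(P) = R` is prime to `p`. Double counting these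
points gives `t_R · |N_S(R)| = |Iso(P,R)| · c`, where `c` is the common size of the fixed-point
sets. Comparing this at `R` and at a fully normalized `Q` gives `p ∤ t_Q`, and axiom (I) follows
from `t_Q = [Aut(Q) : Aut_S(Q)] · (c / |C_S(Q)|)`. For axiom (II), `|X^{(P,φ)}|` is
`|C_S(φ(P))|` times the number of orbits meeting `X^{(P,φ)}`, so this number is prime to `p`
when `φ(P)` is fully centralized; the `p`-group `N_φ` permutes these orbits, and a point of an
orbit it fixes is fixed by a morphism on `N_φ` extending `φ`.
-/

open Pointwise

theorem Nat.card_eq_sum_card_fiber {α β : Type*} [Finite α] [Fintype β] (f : α → β) :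
    Nat.card α = ∑ b, Nat.card {a // f a = b} := by
  rw [← Nat.card_congr (Equiv.sigmaFiberEquiv f), Nat.card_sigma]

theorem Nat.card_eq_card_mul_of_card_fiber_eq {α β : Type*} [Finite α] [Finite β] (f : α → β)
    {k : ℕ} (hf : ∀ b, Nat.card {a // f a = b} = k) : Nat.card α = Nat.card β * k := by
  have := Fintype.ofFinite β
  simp [Nat.card_eq_sum_card_fiber f, hf, mul_comm]

theorem Nat.dvd_card_of_dvd_card_fiber {α β : Type*} [Finite α] [Finite β] (f : α → β) {p : ℕ}
    (hf : ∀ b, p ∣ Nat.card {a // f a = b}) : p ∣ Nat.card α := by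
  have := Fintype.ofFinite β
  exact Nat.card_eq_sum_card_fiber f ▸ Finset.dvd_sum fun b _ => hf b

theorem Nat.not_dvd_of_mul_eq_mul_of_dvd {p a b m n : ℕ} (ha : 0 < a) (hab : a ∣ b)
    (h : m * a = n * b) (hm : ¬ p ∣ m) : ¬ p ∣ n := by
  obtain ⟨k, rfl⟩ := hab
  have : m = n * k := Nat.eq_of_mul_eq_mul_right ha (by rw [h]; ring)
  exact fun hn => hm (this ▸ hn.mul_right k)

namespace IsPGroup

variable {p : ℕ} [Fact p.Prime] {G K : Type*} [Group G] [Group K]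

theorem card_dvd_card_of_card_le [Finite G] [Finite K] (hG : IsPGroup p G) (hK : IsPGroup p K)
    (h : Nat.card G ≤ Nat.card K) : Nat.card G ∣ Nat.card K := by
  obtain ⟨m, hm⟩ := IsPGroup.iff_card.1 hG
  obtain ⟨n, hn⟩ := IsPGroup.iff_card.1 hK
  rw [hm, hn] at h ⊢
  exact Nat.pow_dvd_pow p ((Nat.pow_le_pow_iff_right (Fact.out : p.Prime).one_lt).1 h)

theorem card_dvd_of_dvd_mul_of_not_dvd [Finite G] (hG : IsPGroup p G) {a b : ℕ}
    (h : Nat.card G ∣ a * b) (hb : ¬ p ∣ b) : Nat.card G ∣ a := by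
  obtain ⟨m, hm⟩ := IsPGroup.iff_card.1 hG
  rw [hm] at h ⊢
  have hcop : Nat.Coprime (p ^ m) b :=
    Nat.Coprime.pow_left m ((Nat.Prime.coprime_iff_not_dvd Fact.out).2 hb)
  exact hcop.dvd_of_dvd_mul_right h

theorem exists_mem_fixedPoints_of_not_dvd {α : Type*} [MulAction G α] (hG : IsPGroup p G)
    {W : Set α} (hW : ∀ g : G, ∀ a ∈ W, g • a ∈ W) (hcard : ¬ p ∣ Nat.card W) :
    ∃ a ∈ W, a ∈ MulAction.fixedPoints G α := by
  let W' : SubMulAction G α := ⟨W, fun g _ ha => hW g _ ha⟩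
  obtain ⟨⟨a, ha⟩, hfix⟩ := hG.nonempty_fixed_point_of_prime_not_dvd_card W' hcard
  exact ⟨a, ha, fun g => congrArg Subtype.val (hfix g)⟩

end IsPGroup

namespace BisetAction

variable {G H : Type*} [Group G] [Group H] {X : Type*} (A : BisetAction G H X)

theorem smul_left_cancel (hA : A.LeftFree) {h₁ h₂ : H} {x : X}
    (h : A.smul h₁ x = A.smul h₂ x) : h₁ = h₂ := by
  refine (inv_mul_eq_one.mp (hA _ x ?_)).symm
  rw [A.mul_smul, h, A.smul_smul, inv_mul_cancel, A.one_smul]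

theorem rmul_right_cancel (hA : A.RightFree) {g₁ g₂ : G} {x : X}
    (h : A.rmul x g₁ = A.rmul x g₂) : g₁ = g₂ := by
  refine (inv_mul_eq_one.mp (hA _ (A.rmul x g₂) ?_)).symm
  rw [A.rmul_rmul, mul_inv_cancel_left, h]

def orbitMk (x : X) : A.leftOrbits := Quotient.mk A.leftOrbitSetoid x

theorem orbitMk_surjective : Function.Surjective A.orbitMk := Quotient.mk_surjective

theorem orbitMk_eq_orbitMk_iff {x y : X} : A.orbitMk x = A.orbitMk y ↔ ∃ h, y = A.smul h x :=
  Quotient.eq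

@[simp]
theorem orbitMk_smul (h : H) (x : X) : A.orbitMk (A.smul h x) = A.orbitMk x :=
  ((A.orbitMk_eq_orbitMk_iff).2 ⟨h, rfl⟩).symm

instance [Finite X] : Finite A.leftOrbits := Quotient.finite _

instance : MulAction G A.leftOrbits where
  smul g := Quotient.map' (fun x => A.rmul x g⁻¹)
    (by rintro x _ ⟨h, rfl⟩; exact ⟨h, A.smul_rmul h x g⁻¹⟩)
  one_smul ℓ := by
    induction ℓ using Quotient.inductionOn
    exact congrArg A.orbitMk (by simpa using A.rmul_one _)
  mul_smul g₁ g₂ ℓ := by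
    induction ℓ using Quotient.inductionOn
    exact congrArg A.orbitMk (by simpa using A.rmul_mul _ g₂⁻¹ g₁⁻¹)

theorem smul_orbitMk (g : G) (x : X) : g • A.orbitMk x = A.orbitMk (A.rmul x g⁻¹) := rfl

theorem card_eq_card_mul_card_image [Finite X] (hA : A.LeftFree) (Y : Set X) (K : Subgroup H)
    (hY : ∀ x ∈ Y, ∀ h, A.smul h x ∈ Y ↔ h ∈ K) :
    Nat.card Y = Nat.card (A.orbitMk '' Y) * Nat.card K := by
  refine Nat.card_eq_card_mul_of_card_fiber_eq (fun y => ⟨A.orbitMk y, y, y.2, rfl⟩) ?_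
  rintro ⟨_, x, hx, rfl⟩
  refine (Nat.card_eq_of_bijective (fun k => ⟨⟨A.smul k x, (hY x hx k).2 k.2⟩, by simp⟩)
    ⟨fun k₁ k₂ hk => Subtype.ext (A.smul_left_cancel hA (congrArg (·.1.1) hk)), ?_⟩).symm
  rintro ⟨⟨y, hy⟩, hxy⟩
  obtain ⟨h, rfl⟩ := (A.orbitMk_eq_orbitMk_iff).1 (congrArg Subtype.val hxy).symm
  exact ⟨⟨h, (hY x hx h).1 hy⟩, rfl⟩

theorem card_eq_card_leftOrbits_mul [Finite X] (hA : A.LeftFree) :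
    Nat.card X = Nat.card A.leftOrbits * Nat.card H := by
  have := A.card_eq_card_mul_card_image hA Set.univ ⊤ (by simp)
  rwa [Nat.card_univ, Set.image_univ_of_surjective A.orbitMk_surjective, Nat.card_univ,
    Subgroup.card_top] at this

section Fix

variable {K : Subgroup G}

theorem eq_of_mem_fix (hA : A.LeftFree) {φ ψ : K →* H} {x : X} (hφ : x ∈ A.Fix K φ)
    (hψ : x ∈ A.Fix K ψ) : φ = ψ :=
  MonoidHom.ext fun u => A.smul_left_cancel hA ((hφ u).symm.trans (hψ u))

theorem injective_of_mem_fix (hA : A.RightFree) {φ : K →* H} {x : X} (hx : x ∈ A.Fix K φ) :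
    Function.Injective φ :=
  fun u v huv => Subtype.ext (A.rmul_right_cancel hA (by rw [hx u, hx v, huv]))

theorem smul_mem_fix {φ : K →* H} {x : X} (hx : x ∈ A.Fix K φ) (h : H) :
    A.smul h x ∈ A.Fix K ((MulAut.conj h).toMonoidHom.comp φ) := by
  intro u
  simp [A.smul_rmul, hx u, A.smul_smul]

theorem smul_mem_fix_iff (hA : A.LeftFree) {φ ψ : K →* H} {x : X} (hx : x ∈ A.Fix K φ)
    (h : H) : A.smul h x ∈ A.Fix K ψ ↔ ψ = (MulAut.conj h).toMonoidHom.comp φ :=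
  ⟨fun hψ => A.eq_of_mem_fix hA hψ (A.smul_mem_fix hx h), fun e => e ▸ A.smul_mem_fix hx h⟩

theorem orbitMk_mem_fixedPoints_iff (hA : A.LeftFree) {x : X} :
    A.orbitMk x ∈ MulAction.fixedPoints K A.leftOrbits ↔ ∃ φ : K →* H, x ∈ A.Fix K φ := by
  simp only [MulAction.mem_fixedPoints, Subgroup.smul_def, smul_orbitMk]
  constructor
  · intro hx
    have hx' (u : K) : ∃ h, A.rmul x u = A.smul h x := by
      simpa [eq_comm, A.orbitMk_eq_orbitMk_iff] using hx u⁻¹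
    choose f hf using hx'
    refine ⟨MonoidHom.mk' f fun u v => A.smul_left_cancel hA (x := x) ?_, hf⟩
    rw [← hf, ← A.smul_smul, ← hf, ← A.smul_rmul, ← hf, Subgroup.coe_mul, A.rmul_mul]
  · rintro ⟨φ, hφ⟩ u
    rw [← Subgroup.coe_inv, hφ, orbitMk_smul]

theorem card_fix_eq [Finite X] (hA : A.LeftFree) (φ : K →* H) :
    Nat.card (A.Fix K φ) =
      Nat.card (A.orbitMk '' A.Fix K φ) * Nat.card (Subgroup.centralizer (φ.range : Set H)) := by
  refine A.card_eq_card_mul_card_image hA _ _ fun x hx h => ?_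
  rw [A.smul_mem_fix_iff hA hx, Subgroup.mem_centralizer_iff, MonoidHom.coe_range,
    Set.forall_mem_range, MonoidHom.ext_iff]
  simp [eq_mul_inv_iff_mul_eq, eq_comm]

end Fix

end BisetAction

theorem MonoidHom.range_conj_comp {G H : Type*} [Group G] [Group H] (f : G →* H) (h : H) :
    ((MulAut.conj h).toMonoidHom.comp f).range = ConjAct.toConjAct h • f.range := by
  rw [MonoidHom.range_comp]
  rfl

section PreFixIso

variable {S : Type*} [Group S] {P Q R : Subgroup S}

def isoHom (e : P ≃* R) : P →* S := R.subtype.comp e.toMonoidHom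

@[simp]
theorem isoHom_apply (e : P ≃* R) (u : P) : isoHom e u = e u := rfl

theorem isoHom_injective : Function.Injective (isoHom : (P ≃* R) → P →* S) :=
  fun _ _ h => MulEquiv.ext fun u => Subtype.ext (DFunLike.congr_fun h u)

theorem isoHom_mapsTo (e : P ≃* R) (u : P) : isoHom e u ∈ R := (e u).2

theorem range_isoHom (e : P ≃* R) : (isoHom e).range = R := by
  ext x
  exact ⟨fun ⟨u, hu⟩ => hu ▸ isoHom_mapsTo e u, fun hx => ⟨e.symm ⟨x, hx⟩, by simp⟩⟩

theorem exists_isoHom_eq {φ : P →* S} (hφ : Function.Injective φ) (hR : φ.range = R) :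
    ∃ e : P ≃* R, isoHom e = φ :=
  ⟨(MonoidHom.ofInjective hφ).trans (MulEquiv.subgroupCongr hR), rfl⟩

namespace BisetAction

variable {X : Type*} (A : BisetAction S S X)

def preFixIso (P R : Subgroup S) : Set (P ≃* R) := {e | (A.Fix P (isoHom e)).Nonempty}

theorem isoHom_mem_preFixHom_iff {e : P ≃* R} : isoHom e ∈ preFixHom A P R ↔ e ∈ A.preFixIso P R :=
  ⟨fun h => h.2.2, fun h => ⟨Subtype.val_injective.comp e.injective, isoHom_mapsTo e, h⟩⟩

theorem isConj_preFixHom_iff : (preFixHom A).IsConj P R ↔ (A.preFixIso P R).Nonempty := by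
  constructor
  · rintro ⟨φ, hφ, hR⟩
    obtain ⟨e, rfl⟩ := exists_isoHom_eq hφ.1 hR
    exact ⟨e, hφ.2.2⟩
  · rintro ⟨e, he⟩
    exact ⟨isoHom e, A.isoHom_mem_preFixHom_iff.2 he, range_isoHom e⟩

theorem symm_mem_preFixIso (hlw : LevelwiseClosed (preFixHom A)) {e : P ≃* R}
    (he : e ∈ A.preFixIso P R) : e.symm ∈ A.preFixIso R P :=
  A.isoHom_mem_preFixHom_iff.1 <| hlw.2.1 P R _ (A.isoHom_mem_preFixHom_iff.2 he)
    (range_isoHom e) _ fun u _ => by simp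

theorem trans_mem_preFixIso (hlw : LevelwiseClosed (preFixHom A)) {e : P ≃* Q} {f : Q ≃* R}
    (he : e ∈ A.preFixIso P Q) (hf : f ∈ A.preFixIso Q R) : e.trans f ∈ A.preFixIso P R :=
  A.isoHom_mem_preFixHom_iff.1 <| hlw.2.2 P Q R _ (A.isoHom_mem_preFixHom_iff.2 he) _
    (A.isoHom_mem_preFixHom_iff.2 hf) (range_isoHom e) (range_isoHom f)

theorem card_preFixIso_congr_right (hlw : LevelwiseClosed (preFixHom A)) {f : Q ≃* R}
    (hf : f ∈ A.preFixIso Q R) : Nat.card (A.preFixIso P Q) = Nat.card (A.preFixIso P R) :=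
  Nat.card_congr
    { toFun e := ⟨e.1.trans f, A.trans_mem_preFixIso hlw e.2 hf⟩
      invFun e := ⟨e.1.trans f.symm, A.trans_mem_preFixIso hlw e.2 (A.symm_mem_preFixIso hlw hf)⟩
      left_inv e := by ext; simp
      right_inv e := by ext; simp }

theorem card_preFixIso_congr_left (hlw : LevelwiseClosed (preFixHom A)) {θ : P ≃* Q}
    (hθ : θ ∈ A.preFixIso P Q) : Nat.card (A.preFixIso Q R) = Nat.card (A.preFixIso P R) :=
  Nat.card_congr
    { toFun e := ⟨θ.trans e.1, A.trans_mem_preFixIso hlw hθ e.2⟩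
      invFun e := ⟨θ.symm.trans e.1, A.trans_mem_preFixIso hlw (A.symm_mem_preFixIso hlw hθ) e.2⟩
      left_inv e := by ext; simp
      right_inv e := by ext; simp }

def fixWithRange (P R : Subgroup S) : Set X := {x | ∃ φ : P →* S, x ∈ A.Fix P φ ∧ φ.range = R}

theorem nonempty_preFixIso_of_mem_fixWithRange (hA : A.RightFree) {x : X}
    (hx : x ∈ A.fixWithRange P R) : (A.preFixIso P R).Nonempty := by
  obtain ⟨φ, hφ, hR⟩ := hx
  obtain ⟨e, rfl⟩ := exists_isoHom_eq (A.injective_of_mem_fix hA hφ) hR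
  exact ⟨e, x, hφ⟩

theorem card_fixWithRange [Finite S] [Finite X] (hA : A.Bifree) {c : ℕ}
    (hc : ∀ φ : P →* S, (A.Fix P φ).Nonempty → Nat.card (A.Fix P φ) = c) :
    Nat.card (A.fixWithRange P R) = Nat.card (A.preFixIso P R) * c := by
  have := Fintype.ofFinite (A.preFixIso P R)
  have hsum : Nat.card (Σ e : A.preFixIso P R, A.Fix P (isoHom e.1)) =
      Nat.card (A.preFixIso P R) * c := by
    rw [Nat.card_sigma, Finset.sum_congr rfl fun e _ => hc _ ⟨_, e.2.some_mem⟩]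
    simp
  rw [← hsum]
  refine (Nat.card_eq_of_bijective (fun ex => ⟨ex.2, _, ex.2.2, range_isoHom ex.1.1⟩)
    ⟨?_, ?_⟩).symm
  · rintro ⟨e, x, hx⟩ ⟨e', x', hx'⟩ h
    obtain rfl : x = x' := congrArg Subtype.val h
    obtain rfl := Subtype.ext (isoHom_injective (A.eq_of_mem_fix hA.1 hx hx'))
    rfl
  · rintro ⟨x, φ, hφ, hR⟩
    obtain ⟨e, rfl⟩ := exists_isoHom_eq (A.injective_of_mem_fix hA.2 hφ) hR
    exact ⟨⟨⟨e, x, hφ⟩, x, hφ⟩, rfl⟩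

theorem smul_mem_fixWithRange_iff (hA : A.LeftFree) {x : X} (hx : x ∈ A.fixWithRange P R)
    (s : S) : A.smul s x ∈ A.fixWithRange P R ↔ s ∈ Subgroup.normalizer (R : Set S) := by
  obtain ⟨φ, hφ, rfl⟩ := hx
  simp only [fixWithRange, Set.mem_ofPred_eq, A.smul_mem_fix_iff hA hφ, exists_eq_left,
    MonoidHom.range_conj_comp, Subgroup.conjAct_pointwise_smul_iff]

theorem card_image_fixWithRange_mul_card_normalizer [Finite S] [Finite X] (hA : A.Bifree)
    {c : ℕ} (hc : ∀ φ : P →* S, (A.Fix P φ).Nonempty → Nat.card (A.Fix P φ) = c) (R : Subgroup S) :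
    Nat.card (A.orbitMk '' A.fixWithRange P R) * Nat.card (Subgroup.normalizer (R : Set S)) =
      Nat.card (A.preFixIso P R) * c := by
  rw [← A.card_fixWithRange hA hc, A.card_eq_card_mul_card_image hA.1 _ _
    fun x hx s => A.smul_mem_fixWithRange_iff hA.1 hx s]

theorem orbitMk_mem_image_fixWithRange_iff {x : X} :
    A.orbitMk x ∈ A.orbitMk '' A.fixWithRange P R ↔
      ∃ φ : P →* S, x ∈ A.Fix P φ ∧ φ.range ∈ MulAction.orbit (ConjAct S) R := by
  constructor
  · rintro ⟨y, ⟨ψ, hψ, rfl⟩, hyx⟩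
    obtain ⟨s, rfl⟩ := A.orbitMk_eq_orbitMk_iff.1 hyx
    exact ⟨_, A.smul_mem_fix hψ s, ConjAct.toConjAct s, (MonoidHom.range_conj_comp ψ s).symm⟩
  · rintro ⟨φ, hφ, g, hg⟩
    refine ⟨_, ⟨_, A.smul_mem_fix hφ (ConjAct.ofConjAct g⁻¹), ?_⟩, A.orbitMk_smul _ x⟩
    rw [MonoidHom.range_conj_comp, ← hg, ConjAct.toConjAct_ofConjAct, inv_smul_smul]

theorem image_fixWithRange_subset_fixedPoints (hA : A.LeftFree) :
    A.orbitMk '' A.fixWithRange P R ⊆ MulAction.fixedPoints P A.leftOrbits := by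
  rintro _ ⟨x, ⟨φ, hφ, -⟩, rfl⟩
  exact (A.orbitMk_mem_fixedPoints_iff hA).2 ⟨φ, hφ⟩

theorem mem_image_fixWithRange_iff_of_mem (hA : A.LeftFree) {ℓ : A.leftOrbits}
    (hℓ : ℓ ∈ A.orbitMk '' A.fixWithRange P R) (R' : Subgroup S) :
    ℓ ∈ A.orbitMk '' A.fixWithRange P R' ↔ R ∈ MulAction.orbit (ConjAct S) R' := by
  obtain ⟨x, ⟨φ, hφ, rfl⟩, rfl⟩ := hℓ
  rw [A.orbitMk_mem_image_fixWithRange_iff]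
  exact ⟨fun ⟨ψ, hψ, h⟩ => A.eq_of_mem_fix hA hφ hψ ▸ h, fun h => ⟨φ, hφ, h⟩⟩

theorem exists_nonempty_preFixIso_not_dvd [Finite S] [Finite X] {p : ℕ} [Fact p.Prime]
    (hS : IsPGroup p S) (hA : A.Bifree) (hL : ¬ p ∣ Nat.card A.leftOrbits) (P : Subgroup S) :
    ∃ R, (A.preFixIso P R).Nonempty ∧ ¬ p ∣ Nat.card (A.orbitMk '' A.fixWithRange P R) := by
  by_contra! h
  refine hL (((hS.to_subgroup P).card_modEq_card_fixedPoints A.leftOrbits).dvd_iff dvd_rfl |>.2 ?_)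
  have hcover (ℓ : MulAction.fixedPoints P A.leftOrbits) :
      ∃ R, ℓ.1 ∈ A.orbitMk '' A.fixWithRange P R := by
    obtain ⟨ℓ, hℓ⟩ := ℓ
    obtain ⟨x, rfl⟩ := A.orbitMk_surjective ℓ
    obtain ⟨φ, hφ⟩ := (A.orbitMk_mem_fixedPoints_iff hA.1).1 hℓ
    exact ⟨φ.range, x, ⟨φ, hφ, rfl⟩, rfl⟩
  choose rangeOf hrangeOf using hcover
  let cls : Subgroup S → MulAction.orbitRel.Quotient (ConjAct S) (Subgroup S) := Quotient.mk''
  have hfiber (ℓ : MulAction.fixedPoints P A.leftOrbits) (R : Subgroup S) :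
      cls (rangeOf ℓ) = cls R ↔ ℓ.1 ∈ A.orbitMk '' A.fixWithRange P R := by
    rw [A.mem_image_fixWithRange_iff_of_mem hA.1 (hrangeOf ℓ), Quotient.eq'',
      MulAction.orbitRel_apply]
  refine Nat.dvd_card_of_dvd_card_fiber (fun ℓ => cls (rangeOf ℓ)) fun c => ?_
  induction c using Quotient.inductionOn with | h R => ?_
  rw [Nat.card_congr ((Equiv.subtypeEquivRight fun ℓ => hfiber ℓ R).trans
    (Equiv.subtypeSubtypeEquivSubtype (A.image_fixWithRange_subset_fixedPoints hA.1 ·)))]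
  by_cases hR : (A.preFixIso P R).Nonempty
  · exact h R hR
  · have : A.fixWithRange P R = ∅ :=
      Set.eq_empty_of_forall_notMem fun _ hx =>
        hR (A.nonempty_preFixIso_of_mem_fixWithRange hA.2 hx)
    simp [this]

end BisetAction

end PreFixIso

section Automorphisms

variable {S : Type*} [Group S] (Q : Subgroup S)

theorem isoHom_normalizerMonoidHom (s : Subgroup.normalizer (Q : Set S)) :
    isoHom (Q.normalizerMonoidHom s) = conjHom (s : S) Q := rfl

theorem autSSet_eq_image :
    autSSet Q = isoHom '' (Q.normalizerMonoidHom.range : Set (MulAut Q)) := by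
  ext φ
  simp only [autSSet, Set.mem_image, SetLike.mem_coe, MonoidHom.mem_range]
  constructor
  · rintro ⟨s, hs, rfl⟩
    exact ⟨_, ⟨⟨s, hs⟩, rfl⟩, isoHom_normalizerMonoidHom Q ⟨s, hs⟩⟩
  · rintro ⟨_, ⟨s, rfl⟩, rfl⟩
    exact ⟨s, s.2, isoHom_normalizerMonoidHom Q s⟩

theorem card_autSSet : Nat.card (autSSet Q) = Nat.card Q.normalizerMonoidHom.range := by
  rw [autSSet_eq_image, Nat.card_image_of_injective isoHom_injective]
  rfl

theorem card_normalizer_eq :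
    Nat.card (Subgroup.normalizer (Q : Set S)) =
      Nat.card (autSSet Q) * Nat.card (Subgroup.centralizer (Q : Set S)) := by
  rw [← Q.normalizerMonoidHom.ker.card_mul_index, Subgroup.index_ker, card_autSSet, mul_comm,
    Subgroup.normalizerMonoidHom_ker, Nat.card_congr (Subgroup.subgroupOfEquivOfLe
      (Subgroup.centralizer_le_normalizer (Q : Set S))).toEquiv]

variable {X : Type*} (A : BisetAction S S X)

theorem conjHom_mem_preFixHom (hlw : LevelwiseClosed (preFixHom A)) {s : S}
    (hs : s ∈ Subgroup.normalizer (Q : Set S)) : conjHom s Q ∈ preFixHom A Q Q :=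
  hlw.1 Q Q s fun u hu => (Subgroup.mem_normalizer_iff.1 hs u).1 hu

theorem autSSet_subset_preFixHom (hlw : LevelwiseClosed (preFixHom A)) :
    autSSet Q ⊆ preFixHom A Q Q := by
  rintro _ ⟨s, hs, rfl⟩
  exact conjHom_mem_preFixHom Q A hlw hs

def BisetAction.autPreFix (hlw : LevelwiseClosed (preFixHom A)) : Subgroup (MulAut Q) where
  carrier := A.preFixIso Q Q
  one_mem' := by
    rw [← map_one Q.normalizerMonoidHom]
    exact (A.isoHom_mem_preFixHom_iff).1 (conjHom_mem_preFixHom Q A hlw (one_mem _))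
  mul_mem' he hf := A.trans_mem_preFixIso hlw hf he
  inv_mem' := A.symm_mem_preFixIso hlw

theorem range_normalizerMonoidHom_le_autPreFix (hlw : LevelwiseClosed (preFixHom A)) :
    Q.normalizerMonoidHom.range ≤ A.autPreFix Q hlw := by
  rintro _ ⟨s, rfl⟩
  exact (A.isoHom_mem_preFixHom_iff).1 (conjHom_mem_preFixHom Q A hlw s.2)

theorem card_autSSet_dvd_card_preFixIso (hlw : LevelwiseClosed (preFixHom A)) :
    Nat.card (autSSet Q) ∣ Nat.card (A.preFixIso Q Q) :=
  card_autSSet Q ▸ Subgroup.card_dvd_of_le (range_normalizerMonoidHom_le_autPreFix Q A hlw)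

theorem preFixHom_self_eq_image [Finite S] : preFixHom A Q Q = isoHom '' A.preFixIso Q Q := by
  ext φ
  constructor
  · rintro ⟨hinj, hmaps, hfix⟩
    have hR : φ.range = Q := Subgroup.eq_of_le_of_card_ge (by rintro _ ⟨u, rfl⟩; exact hmaps u)
      (Nat.card_congr (MonoidHom.ofInjective hinj).toEquiv).le
    obtain ⟨e, rfl⟩ := exists_isoHom_eq hinj hR
    exact ⟨e, hfix, rfl⟩
  · rintro ⟨e, he, rfl⟩
    exact (A.isoHom_mem_preFixHom_iff).2 he

theorem card_preFixHom_self [Finite S] :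
    Nat.card (preFixHom A Q Q) = Nat.card (A.preFixIso Q Q) := by
  rw [preFixHom_self_eq_image, Nat.card_image_of_injective isoHom_injective]

end Automorphisms

theorem mem_closureHom_of_mem {S : Type*} [Group S] {C : Collection S} {P Q : Subgroup S}
    {φ : P →* S} (hφ : φ ∈ C P Q) : φ ∈ closureHom C P Q :=
  fun _ hF => hF P Q hφ

namespace BisetAction

variable {S : Type*} [Group S] {X : Type*} (A : BisetAction S S X) {P : Subgroup S}

theorem smul_rmul_mem_fix_of_mem_Nphi {φ : P →* S} {h : S} (hh : h ∈ Nphi P φ) {x : X}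
    (hx : x ∈ A.Fix P φ) : ∃ y, A.smul y (A.rmul x h) ∈ A.Fix P φ := by
  obtain ⟨hhN, y, -, hy⟩ := hh
  refine ⟨y⁻¹, fun u => ?_⟩
  have hv : h * u * h⁻¹ ∈ P := (Subgroup.mem_normalizer_iff.1 hhN u).1 u.2
  have key : A.rmul x (h * u) = A.smul (y * φ u * y⁻¹) (A.rmul x h) := by
    rw [← hy u _ u.2 hv rfl, ← A.smul_rmul, ← hx ⟨_, hv⟩, A.rmul_rmul, inv_mul_cancel_right]
  rw [A.smul_rmul, A.rmul_rmul, key, A.smul_smul, A.smul_smul]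
  congr 1
  group

theorem smul_mem_image_fix_of_mem_Nphi {φ : P →* S} {g : S} (hg : g ∈ Nphi P φ)
    {ℓ : A.leftOrbits} (hℓ : ℓ ∈ A.orbitMk '' A.Fix P φ) : g • ℓ ∈ A.orbitMk '' A.Fix P φ := by
  obtain ⟨x, hx, rfl⟩ := hℓ
  obtain ⟨y, hy⟩ := A.smul_rmul_mem_fix_of_mem_Nphi (inv_mem hg) hx
  exact ⟨_, hy, by rw [orbitMk_smul, smul_orbitMk]⟩

theorem mem_preFixHom_top_iff (hA : A.RightFree) {φ : P →* S} :
    φ ∈ preFixHom A P ⊤ ↔ (A.Fix P φ).Nonempty :=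
  ⟨fun h => h.2.2, fun ⟨x, hx⟩ => ⟨A.injective_of_mem_fix hA hx, fun _ => trivial, x, hx⟩⟩

theorem nonempty_preFixIso_of_nonempty (hlw : LevelwiseClosed (preFixHom A)) {Q R : Subgroup S}
    (hQ : (A.preFixIso P Q).Nonempty) (hR : (A.preFixIso P R).Nonempty) :
    (A.preFixIso Q R).Nonempty :=
  ⟨_, A.trans_mem_preFixIso hlw (A.symm_mem_preFixIso hlw hQ.some_mem) hR.some_mem⟩

theorem card_centralizer_dvd [Finite X] (hA : A.LeftFree) {c : ℕ}
    (hc : ∀ φ : P →* S, (A.Fix P φ).Nonempty → Nat.card (A.Fix P φ) = c) {R : Subgroup S}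
    (hR : (A.preFixIso P R).Nonempty) : Nat.card (Subgroup.centralizer (R : Set S)) ∣ c := by
  obtain ⟨e, he⟩ := hR
  rw [← hc _ he, A.card_fix_eq hA, range_isoHom]
  exact dvd_mul_left _ _

variable [Finite S] [Finite X]

/-- `t_Q = [Aut_{Pre-Fix(X)}(Q) : Aut_S(Q)] · (c / |C_S(Q)|)`. -/
theorem exists_card_image_fixWithRange_eq_mul (hA : A.Bifree)
    (hlw : LevelwiseClosed (preFixHom A)) {c : ℕ}
    (hc : ∀ φ : P →* S, (A.Fix P φ).Nonempty → Nat.card (A.Fix P φ) = c) {Q : Subgroup S}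
    (hQ : (A.preFixIso P Q).Nonempty) :
    ∃ k c', Nat.card (preFixHom A Q Q) = k * Nat.card (autSSet Q) ∧
      c = c' * Nat.card (Subgroup.centralizer (Q : Set S)) ∧
      Nat.card (A.orbitMk '' A.fixWithRange P Q) = k * c' := by
  obtain ⟨θ, x, hx⟩ := hQ
  obtain ⟨k, hk⟩ := card_autSSet_dvd_card_preFixIso Q A hlw
  have hc' : c = Nat.card (A.orbitMk '' A.Fix P (isoHom θ)) *
      Nat.card (Subgroup.centralizer (Q : Set S)) := by
    rw [← hc _ ⟨x, hx⟩, A.card_fix_eq hA.1, range_isoHom]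
  refine ⟨k, _, by rw [card_preFixHom_self, hk, mul_comm], hc', ?_⟩
  have key := A.card_image_fixWithRange_mul_card_normalizer hA hc Q
  rw [← A.card_preFixIso_congr_left hlw ⟨x, hx⟩, hk, hc'] at key
  refine Nat.eq_of_mul_eq_mul_right (Nat.card_pos (α := Subgroup.normalizer (Q : Set S))) ?_
  rw [key, card_normalizer_eq]
  ring

theorem not_dvd_card_image_fixWithRange_of_card_normalizer_le {p : ℕ} [Fact p.Prime]
    (hS : IsPGroup p S) (hA : A.Bifree) (hlw : LevelwiseClosed (preFixHom A)) {c : ℕ}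
    (hc : ∀ φ : P →* S, (A.Fix P φ).Nonempty → Nat.card (A.Fix P φ) = c) {R Q : Subgroup S}
    (hR : (A.preFixIso P R).Nonempty) (hQ : (A.preFixIso P Q).Nonempty)
    (hN : Nat.card (Subgroup.normalizer (R : Set S)) ≤ Nat.card (Subgroup.normalizer (Q : Set S)))
    (ht : ¬ p ∣ Nat.card (A.orbitMk '' A.fixWithRange P R)) :
    ¬ p ∣ Nat.card (A.orbitMk '' A.fixWithRange P Q) := by
  refine Nat.not_dvd_of_mul_eq_mul_of_dvd Nat.card_pos
    ((hS.to_subgroup _).card_dvd_card_of_card_le (hS.to_subgroup _) hN) ?_ ht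
  obtain ⟨f, hf⟩ := A.nonempty_preFixIso_of_nonempty hlw hQ hR
  rw [A.card_image_fixWithRange_mul_card_normalizer hA hc,
    A.card_image_fixWithRange_mul_card_normalizer hA hc, A.card_preFixIso_congr_right hlw hf]

theorem fullyCentralized_and_autSIsSylow {p : ℕ} [Fact p.Prime] (hS : IsPGroup p S)
    (hA : A.Bifree) (hlw : LevelwiseClosed (preFixHom A)) {c : ℕ}
    (hc : ∀ φ : P →* S, (A.Fix P φ).Nonempty → Nat.card (A.Fix P φ) = c) {R Q : Subgroup S}
    (hR : (A.preFixIso P R).Nonempty) (ht : ¬ p ∣ Nat.card (A.orbitMk '' A.fixWithRange P R))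
    (hQ : (A.preFixIso P Q).Nonempty) (hQN : (preFixHom A).FullyNormalized Q) :
    (preFixHom A).FullyCentralized Q ∧ (preFixHom A).AutSIsSylow p Q := by
  have htQ := A.not_dvd_card_image_fixWithRange_of_card_normalizer_le hS hA hlw hc hR hQ
    (hQN R ((A.isConj_preFixHom_iff).2 (A.nonempty_preFixIso_of_nonempty hlw hQ hR))) ht
  obtain ⟨k, c', hk, hc', htQ'⟩ := A.exists_card_image_fixWithRange_eq_mul hA hlw hc hQ
  rw [htQ'] at htQ
  refine ⟨fun R' hR' => ?_, autSSet_subset_preFixHom Q A hlw, ?_, k,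
    fun h => htQ (h.mul_right c'), hk⟩
  · obtain ⟨e, he⟩ := (A.isConj_preFixHom_iff).1 hR'
    have hdvd := A.card_centralizer_dvd hA.1 hc ⟨_, A.trans_mem_preFixIso hlw hQ.some_mem he⟩
    rw [hc'] at hdvd
    exact Nat.le_of_dvd Nat.card_pos ((hS.to_subgroup _).card_dvd_of_dvd_mul_of_not_dvd
      (mul_comm c' _ ▸ hdvd) fun h => htQ (h.mul_left k))
  · obtain ⟨n, hn⟩ := IsPGroup.iff_card.1 (hS.to_subgroup (Subgroup.normalizer (Q : Set S)))
    obtain ⟨m, -, hm⟩ := (Nat.dvd_prime_pow Fact.out).1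
      (hn ▸ card_normalizer_eq Q ▸ dvd_mul_right _ _)
    exact ⟨m, hm⟩

theorem exists_extension_to_Nphi {p : ℕ} [Fact p.Prime] (hS : IsPGroup p S) (hA : A.Bifree)
    (hlw : LevelwiseClosed (preFixHom A)) {c : ℕ}
    (hc : ∀ φ : P →* S, (A.Fix P φ).Nonempty → Nat.card (A.Fix P φ) = c) {R : Subgroup S}
    (hR : (A.preFixIso P R).Nonempty) (ht : ¬ p ∣ Nat.card (A.orbitMk '' A.fixWithRange P R))
    {φ : P →* S} (hφ : (A.Fix P φ).Nonempty) (hφC : (preFixHom A).FullyCentralized φ.range) :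
    ∃ ψ : Nphi P φ →* S, (A.Fix (Nphi P φ) ψ).Nonempty ∧
      ∀ (u : S) (hu : u ∈ P) (hu' : u ∈ Nphi P φ), ψ ⟨u, hu'⟩ = φ ⟨u, hu⟩ := by
  have hφR := A.nonempty_preFixIso_of_mem_fixWithRange hA.2 ⟨φ, hφ.some_mem, rfl⟩
  obtain ⟨k, c', -, hc', ht'⟩ := A.exists_card_image_fixWithRange_eq_mul hA hlw hc hR
  have hW : ¬ p ∣ Nat.card (A.orbitMk '' A.Fix P φ) := by
    refine Nat.not_dvd_of_mul_eq_mul_of_dvd Nat.card_pos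
      ((hS.to_subgroup _).card_dvd_card_of_card_le (hS.to_subgroup _)
        (hφC R ((A.isConj_preFixHom_iff).2 (A.nonempty_preFixIso_of_nonempty hlw hφR hR))))
      ?_ fun h => ht (ht' ▸ h.mul_left k)
    rw [← hc', ← hc _ hφ, A.card_fix_eq hA.1]
  obtain ⟨_, ⟨x, hx, rfl⟩, hfix⟩ := (hS.to_subgroup (Nphi P φ)).exists_mem_fixedPoints_of_not_dvd
    (fun g _ hℓ => A.smul_mem_image_fix_of_mem_Nphi g.2 hℓ) hW
  obtain ⟨ψ, hψ⟩ := (A.orbitMk_mem_fixedPoints_iff hA.1).1 hfix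
  exact ⟨ψ, ⟨x, hψ⟩, fun u hu hu' =>
    A.smul_left_cancel hA.1 ((hψ ⟨u, hu'⟩).symm.trans (hx ⟨u, hu⟩))⟩

end BisetAction

/-- Let `S` be a finite `p`-group and `X` a finite bifree `(S,S)`-biset
with `|X|/|S|` prime to `p` such that `Pre-Fix(X)` is level-wise closed.  If `P ≤ S` is
such that all the fixed-point sets `X^{(P,φ)}` for `φ ∈ Hom_{Pre-Fix(X)}(P,S)` have the
same cardinality, then `Pre-Fix(X)` is saturated at `P`. -/
theorem preFix_saturatedAt
    (p : ℕ) (hp : p.Prime) (S : Type*) [Group S] [Finite S] (hS : IsPGroup p S)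
    (X : Type*) [Finite X] (A : BisetAction S S X) (hA : A.Bifree)
    (hcard : ¬ p ∣ Nat.card X / Nat.card S)
    (hlw : LevelwiseClosed (preFixHom A))
    (P : Subgroup S)
    (hconst : ∀ φ ψ : P →* S, φ ∈ preFixHom A P ⊤ → ψ ∈ preFixHom A P ⊤ →
      Nat.card (A.Fix P φ) = Nat.card (A.Fix P ψ)) :
    SaturatedAt p (preFixHom A) P := by
  have := Fact.mk hp
  have hc (φ : P →* S) (hφ : (A.Fix P φ).Nonempty) :
      Nat.card (A.Fix P φ) = Nat.card (A.Fix P (conjHom 1 P)) :=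
    hconst _ _ ((A.mem_preFixHom_top_iff hA.2).2 hφ) (hlw.1 P ⊤ 1 fun _ _ => trivial)
  have hL : ¬ p ∣ Nat.card A.leftOrbits := by
    rwa [A.card_eq_card_leftOrbits_mul hA.1, Nat.mul_div_cancel _ Nat.card_pos] at hcard
  obtain ⟨R, hR, ht⟩ := A.exists_nonempty_preFixIso_not_dvd hS hA hL P
  refine ⟨fun Q hQ hQN => A.fullyCentralized_and_autSIsSylow hS hA hlw hc hR ht
    ((A.isConj_preFixHom_iff).1 hQ) hQN, fun φ hφ hφC => ?_⟩
  obtain ⟨ψ, hψ, hext⟩ := A.exists_extension_to_Nphi hS hA hlw hc hR ht hφ.2.2 hφC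
  exact ⟨ψ, mem_closureHom_of_mem ((A.mem_preFixHom_top_iff hA.2).2 hψ), hext⟩
end

section
/- Let p be a prime, S a finite p-group, and X a finite (S,S)-biset satisfying Frobenius reciprocity. Then for every subgroup P ≤ S, every homomorphism ψ: P → S, and every injective homomorphism φ: P → S, one has |X^{(P,φ)}| · |X^{(P,ψ)}| = |X^{(P,φ)}| · |X^{(φ(P), ψ∘φ⁻¹)}|. In particular, if X^{(P,φ)} ≠ ∅, then |X^{(P,ψ)}| = |X^{(φ(P), ψ∘φ⁻¹)}|. -/
/-! ### The standard bisets `[L,ψ] = H ×_{(L,ψ)} G` -/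

section Std

variable {G H : Type*} [Group G] [Group H]

/-- The setoid on `H × G` generated by `(x·ψ(l), y) ∼ (x, l·y)` for `l ∈ L`. -/
def pairSetoid (L : Subgroup G) (ψ : L →* H) : Setoid (H × G) where
  r a b := ∃ l : L, b.1 = a.1 * ψ l ∧ b.2 = (l : G)⁻¹ * a.2
  iseqv := by
    refine ⟨fun a => ⟨1, by simp⟩, ?_, ?_⟩
    · rintro ⟨a1, a2⟩ ⟨b1, b2⟩ ⟨l, h1, h2⟩
      dsimp only at h1 h2 ⊢
      refine ⟨l⁻¹, ?_, ?_⟩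
      · rw [map_inv, h1, mul_assoc, mul_inv_cancel, mul_one]
      · rw [h2]; simp [mul_assoc]
    · rintro ⟨a1, a2⟩ ⟨b1, b2⟩ ⟨c1, c2⟩ ⟨l, h1, h2⟩ ⟨m, h3, h4⟩
      dsimp only at h1 h2 h3 h4 ⊢
      refine ⟨l * m, ?_, ?_⟩
      · rw [map_mul, h3, h1, mul_assoc]
      · rw [h4, h2]
        simp only [Subgroup.coe_mul, mul_inv_rev, mul_assoc]

/-- The biset `[L,ψ] = H ×_{(L,ψ)} G`: the quotient of `H × G` by the relation
`(x·ψ(l), y) ∼ (x, l·y)` for `l ∈ L`. -/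
def stdBiset (L : Subgroup G) (ψ : L →* H) : Type _ := Quotient (pairSetoid L ψ)

/-- The `(G,H)`-biset structure on `[L,ψ]`: `h·[x,y]·g = [h·x, y·g]`. -/
def stdBisetAction (L : Subgroup G) (ψ : L →* H) : BisetAction G H (stdBiset L ψ) where
  smul h := Quotient.map (fun a => (h * a.1, a.2)) (by
    rintro ⟨a1, a2⟩ ⟨b1, b2⟩ ⟨l, h1, h2⟩
    dsimp only at h1 h2 ⊢
    exact ⟨l, by rw [h1, mul_assoc], h2⟩)
  rmul x g := Quotient.map (fun a => (a.1, a.2 * g)) (by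
    rintro ⟨a1, a2⟩ ⟨b1, b2⟩ ⟨l, h1, h2⟩
    dsimp only at h1 h2 ⊢
    exact ⟨l, h1, by rw [h2, mul_assoc]⟩) x
  one_smul x := by
    refine Quotient.inductionOn x (fun a => ?_)
    exact congrArg (Quotient.mk _) (by dsimp only; rw [one_mul])
  mul_smul h₁ h₂ x := by
    refine Quotient.inductionOn x (fun a => ?_)
    exact congrArg (Quotient.mk _) (by dsimp only; rw [mul_assoc])
  rmul_one x := by
    refine Quotient.inductionOn x (fun a => ?_)
    exact congrArg (Quotient.mk _) (by dsimp only; rw [mul_one])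
  rmul_mul x g₁ g₂ := by
    refine Quotient.inductionOn x (fun a => ?_)
    exact congrArg (Quotient.mk _) (by dsimp only; rw [mul_assoc])
  smul_rmul h x g := by
    refine Quotient.inductionOn x (fun a => ?_)
    rfl

end Std

/-! ### Tensor product (composition) of bisets -/

section Tensor

variable {G H K : Type*} [Group G] [Group H] [Group K] {X Y : Type*}

/-- The setoid on `Y × X` defining `Y ×_H X`, for `X` a `(G,H)`-biset and `Y` an
`(H,K)`-biset: `(y·h, x) ∼ (y, h·x)`. -/
def tensorSetoid (A : BisetAction G H X) (B : BisetAction H K Y) : Setoid (Y × X) where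
  r a b := ∃ h : H, b.1 = B.rmul a.1 h ∧ b.2 = A.smul h⁻¹ a.2
  iseqv := by
    refine ⟨fun a => ⟨1, by rw [B.rmul_one], by rw [inv_one, A.one_smul]⟩, ?_, ?_⟩
    · rintro ⟨y, x⟩ ⟨y', x'⟩ ⟨h, h1, h2⟩
      dsimp only at h1 h2 ⊢
      refine ⟨h⁻¹, ?_, ?_⟩
      · rw [h1, B.rmul_rmul, mul_inv_cancel, B.rmul_one]
      · rw [h2, A.smul_smul, inv_inv, mul_inv_cancel, A.one_smul]
    · rintro ⟨y, x⟩ ⟨y', x'⟩ ⟨y'', x''⟩ ⟨h, h1, h2⟩ ⟨h', h3, h4⟩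
      dsimp only at h1 h2 h3 h4 ⊢
      refine ⟨h * h', ?_, ?_⟩
      · rw [h3, h1, B.rmul_rmul]
      · rw [h4, h2, A.smul_smul, mul_inv_rev]

/-- The composite biset `Y ×_H X`, a `(G,K)`-biset. -/
def tensorBiset (A : BisetAction G H X) (B : BisetAction H K Y) : Type _ :=
  Quotient (tensorSetoid A B)

/-- The `(G,K)`-biset structure on `Y ×_H X`. -/
def tensorAction (A : BisetAction G H X) (B : BisetAction H K Y) :
    BisetAction G K (tensorBiset A B) where
  smul k := Quotient.map (fun a => (B.smul k a.1, a.2)) (by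
    rintro ⟨y, x⟩ ⟨y', x'⟩ ⟨h, h1, h2⟩
    dsimp only at h1 h2 ⊢
    exact ⟨h, by rw [h1, B.smul_rmul], h2⟩)
  rmul z g := Quotient.map (fun a => (a.1, A.rmul a.2 g)) (by
    rintro ⟨y, x⟩ ⟨y', x'⟩ ⟨h, h1, h2⟩
    dsimp only at h1 h2 ⊢
    exact ⟨h, h1, by rw [h2, A.smul_rmul]⟩) z
  one_smul z := by
    refine Quotient.inductionOn z (fun a => ?_)
    exact congrArg (Quotient.mk _) (by dsimp only; rw [B.one_smul])
  mul_smul k₁ k₂ z := by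
    refine Quotient.inductionOn z (fun a => ?_)
    exact congrArg (Quotient.mk _) (by dsimp only; rw [B.mul_smul])
  rmul_one z := by
    refine Quotient.inductionOn z (fun a => ?_)
    exact congrArg (Quotient.mk _) (by dsimp only; rw [A.rmul_one])
  rmul_mul z g₁ g₂ := by
    refine Quotient.inductionOn z (fun a => ?_)
    exact congrArg (Quotient.mk _) (by dsimp only; rw [A.rmul_mul])
  smul_rmul k z g := by
    refine Quotient.inductionOn z (fun a => ?_)
    rfl

end Tensor

/-! ### Products of bisets -/

section Prod

variable {G₁ G₂ H₁ H₂ S : Type*} [Group G₁] [Group G₂] [Group H₁] [Group H₂] [Group S]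
variable {X Y : Type*}

/-- The product of a `(G₁,H₁)`-biset and a `(G₂,H₂)`-biset, a
`(G₁ × G₂, H₁ × H₂)`-biset with coordinatewise actions. -/
def prodAction (A : BisetAction G₁ H₁ X) (B : BisetAction G₂ H₂ Y) :
    BisetAction (G₁ × G₂) (H₁ × H₂) (X × Y) where
  smul h z := (A.smul h.1 z.1, B.smul h.2 z.2)
  rmul z g := (A.rmul z.1 g.1, B.rmul z.2 g.2)
  one_smul z := by simp [A.one_smul, B.one_smul]
  mul_smul h₁ h₂ z := by simp [A.mul_smul, B.mul_smul]
  rmul_one z := by simp [A.rmul_one, B.rmul_one]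
  rmul_mul z g₁ g₂ := by simp [A.rmul_mul, B.rmul_mul]
  smul_rmul h z g := by simp [A.smul_rmul, B.smul_rmul]

/-- `X × Y` endowed with the `(S, H₁ × H₂)`-biset structure
`(b₁,b₂)·(x,y)·a = (b₁·x·a, b₂·y·a)` (the right `S`-action is diagonal). -/
def diagProdAction (A : BisetAction S H₁ X) (B : BisetAction S H₂ Y) :
    BisetAction S (H₁ × H₂) (X × Y) where
  smul h z := (A.smul h.1 z.1, B.smul h.2 z.2)
  rmul z a := (A.rmul z.1 a, B.rmul z.2 a)
  one_smul z := by simp [A.one_smul, B.one_smul]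
  mul_smul h₁ h₂ z := by simp [A.mul_smul, B.mul_smul]
  rmul_one z := by simp [A.rmul_one, B.rmul_one]
  rmul_mul z g₁ g₂ := by simp [A.rmul_mul, B.rmul_mul]
  smul_rmul h z g := by simp [A.smul_rmul, B.smul_rmul]

/-- `X × Y` endowed with the `(S, S × S)`-biset structure
`(b₁,b₂)·(x,y)·a = (b₁·x·b₂⁻¹, b₂·y·a)`, for `(S,S)`-bisets `X` and `Y`. -/
def twistProdAction (A : BisetAction S S X) (B : BisetAction S S Y) :
    BisetAction S (S × S) (X × Y) where
  smul b z := (A.rmul (A.smul b.1 z.1) b.2⁻¹, B.smul b.2 z.2)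
  rmul z a := (z.1, B.rmul z.2 a)
  one_smul z := by simp [A.one_smul, B.one_smul, A.rmul_one]
  mul_smul b c z := by
    simp only [Prod.fst_mul, Prod.snd_mul, Prod.mk.injEq, mul_inv_rev]
    refine ⟨?_, B.mul_smul _ _ _⟩
    rw [A.mul_smul, ← A.rmul_rmul, A.smul_rmul]
  rmul_one z := by simp [B.rmul_one]
  rmul_mul z g₁ g₂ := by simp [B.rmul_mul]
  smul_rmul h z g := by simp [B.smul_rmul]

end Prod

/-- A finite `(S,S)`-biset `X` satisfies Frobenius reciprocity if the `(S,S×S)`-biset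
`X×X` with actions `(b₁,b₂)·(x,y)·a = (b₁·x·a, b₂·y·a)` is isomorphic to the
`(S,S×S)`-biset `X×X` with actions `(b₁,b₂)·(x,y)·a = (b₁·x·b₂⁻¹, b₂·y·a)`
(these model `(X×X)∘[S,Δ]` and `((X×1)∘[S,Δ])∘X` respectively). -/
def FrobeniusRec {S X : Type*} [Group S] (A : BisetAction S S X) : Prop :=
  Nonempty (BisetIso (diagProdAction A A) (twistProdAction A A))

/-! A biset isomorphism restricts to bijections of fixed-point sets. At `(P, (ψ,φ))` the
fixed points of the diagonal product `X × X` form `X^{(P,ψ)} × X^{(P,φ)}`, while `(x,y)` is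
fixed in the twisted product iff `y ∈ X^{(P,φ)}` and `x·φ(u) = ψ(u)·x` for all `u ∈ P`, i.e.
`x ∈ X^{(φ(P),ψ∘φ⁻¹)}`. Frobenius reciprocity therefore identifies
`X^{(P,ψ)} × X^{(P,φ)}` with `X^{(φ(P),ψ∘φ⁻¹)} × X^{(P,φ)}`. -/

namespace BisetAction

variable {G H : Type*} [Group G] [Group H] {X : Type*}

lemma eq_rmul_inv_iff (A : BisetAction G H X) (x : X) (g : G) (h : H) :
    x = A.rmul (A.smul h x) g⁻¹ ↔ A.rmul x g = A.smul h x := by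
  constructor
  · intro hx
    conv_lhs => rw [hx]
    rw [A.rmul_rmul, inv_mul_cancel, A.rmul_one]
  · intro hx
    rw [← hx, A.rmul_rmul, mul_inv_cancel, A.rmul_one]

lemma mem_fix_range_iff (A : BisetAction G H X) {P : Type*} [Group P] (φ : P →* G)
    (ψ : P →* H) (χ : φ.range →* H) (hχ : ∀ u : P, χ ⟨φ u, ⟨u, rfl⟩⟩ = ψ u) (x : X) :
    x ∈ A.Fix φ.range χ ↔ ∀ u : P, A.rmul x (φ u) = A.smul (ψ u) x := by
  constructor
  · intro hx u
    rw [← hχ u]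
    exact hx ⟨φ u, ⟨u, rfl⟩⟩
  · rintro hx ⟨_, u, rfl⟩
    rw [hχ u]
    exact hx u

end BisetAction

namespace BisetIso

variable {G H : Type*} [Group G] [Group H] {X Y : Type*}
  {A : BisetAction G H X} {B : BisetAction G H Y}

def fixEquiv (F : BisetIso A B) (P : Subgroup G) (θ : P →* H) :
    A.Fix P θ ≃ B.Fix P θ where
  toFun x := ⟨F.toEquiv x, fun u => by rw [← F.map_rmul, x.2 u, F.map_smul]⟩
  invFun y := ⟨F.toEquiv.symm y, fun u => F.toEquiv.injective <| by
    rw [F.map_rmul, Equiv.apply_symm_apply, y.2 u, F.map_smul, Equiv.apply_symm_apply]⟩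
  left_inv x := Subtype.ext (F.toEquiv.symm_apply_apply x)
  right_inv y := Subtype.ext (F.toEquiv.apply_symm_apply y)

end BisetIso

section ProdFix

variable {S H₁ H₂ : Type*} [Group S] [Group H₁] [Group H₂] {X Y : Type*}

def diagProdFixEquiv (A : BisetAction S H₁ X) (B : BisetAction S H₂ Y)
    (P : Subgroup S) (θ₁ : P →* H₁) (θ₂ : P →* H₂) :
    (diagProdAction A B).Fix P (θ₁.prod θ₂) ≃ A.Fix P θ₁ × B.Fix P θ₂ where
  toFun z := (⟨z.1.1, fun u => congrArg Prod.fst (z.2 u)⟩,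
    ⟨z.1.2, fun u => congrArg Prod.snd (z.2 u)⟩)
  invFun w := ⟨(w.1.1, w.2.1), fun u => Prod.ext (w.1.2 u) (w.2.2 u)⟩
  left_inv _ := rfl
  right_inv _ := rfl

def twistProdFixEquiv (A : BisetAction S S X) (B : BisetAction S S Y) (P : Subgroup S)
    (ψ φ : P →* S) (χ : φ.range →* S) (hχ : ∀ u : P, χ ⟨φ u, ⟨u, rfl⟩⟩ = ψ u) :
    (twistProdAction A B).Fix P (ψ.prod φ) ≃ A.Fix φ.range χ × B.Fix P φ where
  toFun z := (⟨z.1.1, (A.mem_fix_range_iff φ ψ χ hχ _).mpr fun u =>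
      (A.eq_rmul_inv_iff _ _ _).mp (congrArg Prod.fst (z.2 u))⟩,
    ⟨z.1.2, fun u => congrArg Prod.snd (z.2 u)⟩)
  invFun w := ⟨(w.1.1, w.2.1), fun u => Prod.ext
    ((A.eq_rmul_inv_iff _ _ _).mpr ((A.mem_fix_range_iff φ ψ χ hχ _).mp w.1.2 u))
    (w.2.2 u)⟩
  left_inv _ := rfl
  right_inv _ := rfl

end ProdFix

lemma FrobeniusRec.card_fix_mul_card_fix {S X : Type*} [Group S] {A : BisetAction S S X}
    (hfrob : FrobeniusRec A) (P : Subgroup S) (ψ φ : P →* S) (χ : φ.range →* S)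
    (hχ : ∀ u : P, χ ⟨φ u, ⟨u, rfl⟩⟩ = ψ u) :
    Nat.card (A.Fix P ψ) * Nat.card (A.Fix P φ) =
      Nat.card (A.Fix φ.range χ) * Nat.card (A.Fix P φ) := by
  obtain ⟨F⟩ := hfrob
  rw [← Nat.card_prod, ← Nat.card_prod]
  exact Nat.card_congr <| (diagProdFixEquiv A A P ψ φ).symm.trans <|
    (F.fixEquiv P (ψ.prod φ)).trans (twistProdFixEquiv A A P ψ φ χ hχ)

theorem frobeniusRec_fix_card_general
    (S : Type*) [Group S]
    (X : Type*) [Finite X] (A : BisetAction S S X) (hfrob : FrobeniusRec A)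
    (P : Subgroup S) (ψ φ : P →* S)
    (χ : φ.range →* S) (hχ : ∀ u : P, χ ⟨φ u, ⟨u, rfl⟩⟩ = ψ u) :
    Nat.card (A.Fix P φ) * Nat.card (A.Fix P ψ) =
      Nat.card (A.Fix P φ) * Nat.card (A.Fix φ.range χ) ∧
    ((A.Fix P φ).Nonempty →
      Nat.card (A.Fix P ψ) = Nat.card (A.Fix φ.range χ)) := by
  have key := hfrob.card_fix_mul_card_fix P ψ φ χ hχ
  refine ⟨by rw [mul_comm, key, mul_comm], fun hne => ?_⟩
  have : Nonempty (A.Fix P φ) := hne.to_subtype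
  exact Nat.eq_of_mul_eq_mul_right Nat.card_pos key

/-- Let `S` be a finite `p`-group and `X` a finite `(S,S)`-biset
satisfying Frobenius reciprocity.  For every `P ≤ S`, every homomorphism `ψ : P →* S`
and every injective homomorphism `φ : P →* S`, one has
`|X^{(P,φ)}|·|X^{(P,ψ)}| = |X^{(P,φ)}|·|X^{(φ(P),ψ∘φ⁻¹)}|`; in particular, if
`X^{(P,φ)} ≠ ∅` then `|X^{(P,ψ)}| = |X^{(φ(P),ψ∘φ⁻¹)}|`. -/
theorem frobeniusRec_fix_card
    (p : ℕ) (hp : p.Prime) (S : Type*) [Group S] [Finite S] (hS : IsPGroup p S)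
    (X : Type*) [Finite X] (A : BisetAction S S X) (hfrob : FrobeniusRec A)
    (P : Subgroup S) (ψ φ : P →* S) (hφ : Function.Injective φ)
    (χ : φ.range →* S) (hχ : ∀ u : P, χ ⟨φ u, ⟨u, rfl⟩⟩ = ψ u) :
    Nat.card (A.Fix P φ) * Nat.card (A.Fix P ψ) =
      Nat.card (A.Fix P φ) * Nat.card (A.Fix φ.range χ) ∧
    ((A.Fix P φ).Nonempty →
      Nat.card (A.Fix P ψ) = Nat.card (A.Fix φ.range χ)) :=
  frobeniusRec_fix_card_general S X A hfrob P ψ φ χ hχ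
end
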